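/- Let R = ℂ[x,y,z,w]/(yz − xw, xz² − y²w). Then the quotient R/(y³ − x²z, z³ − yw²) is isomorphic as a ℂ-algebra to the subring ℂ[s⁴, s³t, st³, t⁴] of ℂ[s,t]. -/

import Mathlib

open MvPolynomial

/-! The classes of the standard monomials `x^a y^b z^c w^e` (with `b, c ≤ 2`, `bc = 0`, and
`a = 0` when `c = 2`) span the quotient, since each of the four relations rewrites a non-standard
monomial to one with smaller `b + 2c`. The substitution `x, y, z, w ↦ s⁴, s³t, st³, t⁴` sends the
standard monomials to pairwise distinct monomials in `s, t`, which are linearly independent; hence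
the induced map on the quotient is injective. -/

theorem LinearMap.injective_of_span_eq_top_of_linearIndependent_comp
    {R M N ι : Type*} [Ring R] [AddCommGroup M] [Module R M] [AddCommGroup N] [Module R N]
    (f : M →ₗ[R] N) {v : ι → M} (hv : Submodule.span R (Set.range v) = ⊤)
    (hfv : LinearIndependent R (f ∘ v)) : Function.Injective f := by
  let b := Module.Basis.mk (hfv.of_comp f) hv.ge
  have hf : b.constr ℕ (f ∘ v) = f := by
    convert b.constr_self ℕ f using 2
    ext i
    simp [b]
  exact hf ▸ b.injective_constr_of_linearIndependent hfv

section Quartic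

variable (R : Type*) [CommRing R]

noncomputable def quarticParametrization :
    MvPolynomial (Fin 4) R →ₐ[R] MvPolynomial (Fin 2) R :=
  aeval ![X 0 ^ 4, X 0 ^ 3 * X 1, X 0 * X 1 ^ 3, X 1 ^ 4]

noncomputable def quarticIdeal : Ideal (MvPolynomial (Fin 4) R) :=
  Ideal.span {X 1 * X 2 - X 0 * X 3, X 0 * X 2 ^ 2 - X 1 ^ 2 * X 3,
    X 1 ^ 3 - X 0 ^ 2 * X 2, X 2 ^ 3 - X 1 * X 3 ^ 2}

theorem quarticIdeal_le_ker : quarticIdeal R ≤ RingHom.ker (quarticParametrization R) :=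
  Ideal.span_le.2 <| by
    rintro _ (rfl | rfl | rfl | rfl) <;>
      simp only [SetLike.mem_coe, RingHom.mem_ker, map_sub, map_mul, map_pow,
        quarticParametrization, aeval_X, Matrix.cons_val] <;> ring

noncomputable def quarticLift :
    MvPolynomial (Fin 4) R ⧸ quarticIdeal R →ₐ[R] MvPolynomial (Fin 2) R :=
  Ideal.Quotient.liftₐ _ (quarticParametrization R) fun _ hp => quarticIdeal_le_ker R hp

@[simp]
theorem quarticLift_mk (p : MvPolynomial (Fin 4) R) :
    quarticLift R (Ideal.Quotient.mk _ p) = quarticParametrization R p :=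
  rfl

theorem range_quarticLift : (quarticLift R).range =
    Algebra.adjoin R {X 0 ^ 4, X 0 ^ 3 * X 1, X 0 * X 1 ^ 3, X 1 ^ 4} := by
  have : (quarticLift R).comp (Ideal.Quotient.mkₐ R _) = quarticParametrization R := by
    ext; rfl
  rw [← Algebra.map_top, ← (AlgHom.range_eq_top _).2 (Ideal.Quotient.mkₐ_surjective R _),
    ← AlgHom.range_comp, this, quarticParametrization, ← Algebra.adjoin_range_eq_range_aeval]
  simp only [Matrix.range_cons, Matrix.range_empty, Set.union_empty, Set.singleton_union]

local notation "𝔵" i => Ideal.Quotient.mk (quarticIdeal R) (X i)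

noncomputable def quarticMonomial : ℕ × ℕ × ℕ × ℕ → MvPolynomial (Fin 4) R ⧸ quarticIdeal R
  | (a, b, c, e) => (𝔵 0) ^ a * (𝔵 1) ^ b * (𝔵 2) ^ c * (𝔵 3) ^ e

theorem quarticIdeal_relations :
    (𝔵 1) * (𝔵 2) = (𝔵 0) * (𝔵 3) ∧ (𝔵 0) * (𝔵 2) ^ 2 = (𝔵 1) ^ 2 * (𝔵 3) ∧
      (𝔵 1) ^ 3 = (𝔵 0) ^ 2 * (𝔵 2) ∧ (𝔵 2) ^ 3 = (𝔵 1) * (𝔵 3) ^ 2 := by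
  refine ⟨?_, ?_, ?_, ?_⟩ <;> simp only [← map_mul, ← map_pow, Ideal.Quotient.eq] <;>
    exact Ideal.subset_span (by simp)

def IsStandardExponent : ℕ × ℕ × ℕ × ℕ → Prop
  | (a, b, c, _) => b ≤ 2 ∧ c ≤ 2 ∧ (c ≠ 0 → b = 0) ∧ (c = 2 → a = 0)

theorem quarticMonomial_mem_span_standard (m : ℕ × ℕ × ℕ × ℕ) :
    quarticMonomial R m ∈
      Submodule.span R (Set.range fun m : {m // IsStandardExponent m} => quarticMonomial R m) := by
  obtain ⟨hyz, hxz, hy, hz⟩ := quarticIdeal_relations R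
  obtain ⟨a, b, c, e⟩ := m
  induction h : b + 2 * c using Nat.strong_induction_on generalizing a b c e with
  | _ n ih =>
  subst h
  by_cases hbc : b ≠ 0 ∧ c ≠ 0
  · obtain ⟨b, rfl⟩ := Nat.exists_eq_succ_of_ne_zero hbc.1
    obtain ⟨c, rfl⟩ := Nat.exists_eq_succ_of_ne_zero hbc.2
    have : quarticMonomial R (a, b + 1, c + 1, e) = quarticMonomial R (a + 1, b, c, e + 1) := by
      simp only [quarticMonomial]
      linear_combination (𝔵 0) ^ a * (𝔵 1) ^ b * (𝔵 2) ^ c * (𝔵 3) ^ e * hyz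
    exact this ▸ ih _ (by omega) _ _ _ _ rfl
  by_cases hb : 3 ≤ b
  · obtain ⟨b, rfl⟩ := Nat.exists_eq_add_of_le' hb
    have : quarticMonomial R (a, b + 3, c, e) = quarticMonomial R (a + 2, b, c + 1, e) := by
      simp only [quarticMonomial]
      linear_combination (𝔵 0) ^ a * (𝔵 1) ^ b * (𝔵 2) ^ c * (𝔵 3) ^ e * hy
    exact this ▸ ih _ (by omega) _ _ _ _ rfl
  by_cases hc : 3 ≤ c
  · obtain ⟨c, rfl⟩ := Nat.exists_eq_add_of_le' hc
    have : quarticMonomial R (a, b, c + 3, e) = quarticMonomial R (a, b + 1, c, e + 2) := by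
      simp only [quarticMonomial]
      linear_combination (𝔵 0) ^ a * (𝔵 1) ^ b * (𝔵 2) ^ c * (𝔵 3) ^ e * hz
    exact this ▸ ih _ (by omega) _ _ _ _ rfl
  by_cases hac : a ≠ 0 ∧ c = 2
  · obtain ⟨a, rfl⟩ := Nat.exists_eq_succ_of_ne_zero hac.1
    obtain rfl := hac.2
    have : quarticMonomial R (a + 1, b, 2, e) = quarticMonomial R (a, b + 2, 0, e + 1) := by
      simp only [quarticMonomial]
      linear_combination (𝔵 0) ^ a * (𝔵 1) ^ b * (𝔵 3) ^ e * hxz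
    exact this ▸ ih _ (by omega) _ _ _ _ rfl
  exact Submodule.subset_span ⟨⟨_, by unfold IsStandardExponent; omega⟩, rfl⟩

theorem mk_monomial_one_eq_quarticMonomial (d : Fin 4 →₀ ℕ) :
    Ideal.Quotient.mk (quarticIdeal R) (monomial d 1) =
      quarticMonomial R (d 0, d 1, d 2, d 3) := by
  simp [monomial_eq, Finsupp.prod_fintype, Fin.prod_univ_four, quarticMonomial]

theorem span_quarticMonomial_standard :
    Submodule.span R
      (Set.range fun m : {m // IsStandardExponent m} => quarticMonomial R m) = ⊤ := by
  let π := (Ideal.Quotient.mkₐ R (quarticIdeal R)).toLinearMap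
  have hπ : LinearMap.range π = ⊤ :=
    LinearMap.range_eq_top.2 (Ideal.Quotient.mkₐ_surjective R _)
  rw [eq_top_iff, ← hπ, LinearMap.range_eq_map, ← (basisMonomials (Fin 4) R).span_eq,
    Submodule.map_span, Submodule.span_le]
  rintro _ ⟨_, ⟨d, rfl⟩, rfl⟩
  simpa [π, mk_monomial_one_eq_quarticMonomial] using
    quarticMonomial_mem_span_standard R (d 0, d 1, d 2, d 3)

noncomputable def quarticWeight : ℕ × ℕ × ℕ × ℕ → Fin 2 →₀ ℕ
  | (a, b, c, e) =>
    Finsupp.single 0 (4 * a + 3 * b + c) + Finsupp.single 1 (b + 3 * c + 4 * e)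

theorem quarticLift_quarticMonomial (m : ℕ × ℕ × ℕ × ℕ) :
    quarticLift R (quarticMonomial R m) = monomial (quarticWeight m) 1 := by
  obtain ⟨a, b, c, e⟩ := m
  calc quarticLift R (quarticMonomial R (a, b, c, e))
      _ = X 0 ^ (4 * a + 3 * b + c) * X 1 ^ (b + 3 * c + 4 * e) := by
        simp only [quarticMonomial, map_mul, map_pow, quarticLift_mk, quarticParametrization,
          aeval_X, Matrix.cons_val]
        ring
      _ = monomial (quarticWeight (a, b, c, e)) 1 := by
        rw [X_pow_eq_monomial, X_pow_eq_monomial, monomial_mul, one_mul]; rfl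

theorem quarticWeight_injective_standard :
    Function.Injective fun m : {m // IsStandardExponent m} => quarticWeight m := by
  rintro ⟨⟨a, b, c, e⟩, hm⟩ ⟨⟨a', b', c', e'⟩, hm'⟩ h
  have h0 := DFunLike.congr_fun h 0
  have h1 := DFunLike.congr_fun h 1
  simp only [quarticWeight, Finsupp.add_apply, Finsupp.single_eq_same,
    Finsupp.single_eq_of_ne zero_ne_one, Finsupp.single_eq_of_ne one_ne_zero, add_zero,
    zero_add] at h0 h1
  simp only [Subtype.mk.injEq, Prod.mk.injEq]
  obtain ⟨hb, hc, hbc, hac⟩ := hm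
  obtain ⟨hb', hc', hbc', hac'⟩ := hm'
  interval_cases c <;> interval_cases c' <;> omega

theorem quarticLift_injective : Function.Injective (quarticLift R) := by
  have hli : LinearIndependent R
      ((quarticLift R).toLinearMap ∘
        fun m : {m // IsStandardExponent m} => quarticMonomial R m) := by
    have h := (basisMonomials (Fin 2) R).linearIndependent.comp _
      quarticWeight_injective_standard
    simpa only [Function.comp_def, coe_basisMonomials, AlgHom.toLinearMap_apply,
      quarticLift_quarticMonomial] using h
  exact LinearMap.injective_of_span_eq_top_of_linearIndependent_comp _
    (span_quarticMonomial_standard R) hli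

@[simp]
theorem quarticLift_mk_X :
    quarticLift R (𝔵 0) = X 0 ^ 4 ∧ quarticLift R (𝔵 1) = X 0 ^ 3 * X 1 ∧
      quarticLift R (𝔵 2) = X 0 * X 1 ^ 3 ∧ quarticLift R (𝔵 3) = X 1 ^ 4 := by
  simp [quarticParametrization]

end Quartic

/-- The quotient `ℂ[x,y,z,w]/(yz - xw, xz² - y²w, y³ - x²z, z³ - yw²)` is
isomorphic, as a `ℂ`-algebra, to the subring `ℂ[s⁴, s³t, st³, t⁴]` of `ℂ[s,t]`,
via `x ↦ s⁴`, `y ↦ s³t`, `z ↦ st³`, `w ↦ t⁴`. -/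
theorem component_iso_semigroup_ring :
    letI x : MvPolynomial (Fin 4) ℂ := X 0
    letI y : MvPolynomial (Fin 4) ℂ := X 1
    letI z : MvPolynomial (Fin 4) ℂ := X 2
    letI w : MvPolynomial (Fin 4) ℂ := X 3
    letI I : Ideal (MvPolynomial (Fin 4) ℂ) :=
      Ideal.span {y * z - x * w, x * z ^ 2 - y ^ 2 * w,
        y ^ 3 - x ^ 2 * z, z ^ 3 - y * w ^ 2}
    letI s : MvPolynomial (Fin 2) ℂ := X 0
    letI t : MvPolynomial (Fin 2) ℂ := X 1
    ∃ φ : (MvPolynomial (Fin 4) ℂ ⧸ I) →ₐ[ℂ] MvPolynomial (Fin 2) ℂ,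
      Function.Injective φ ∧
      φ.range = Algebra.adjoin ℂ {s ^ 4, s ^ 3 * t, s * t ^ 3, t ^ 4} ∧
      φ (Ideal.Quotient.mk I x) = s ^ 4 ∧
      φ (Ideal.Quotient.mk I y) = s ^ 3 * t ∧
      φ (Ideal.Quotient.mk I z) = s * t ^ 3 ∧
      φ (Ideal.Quotient.mk I w) = t ^ 4 :=
  ⟨quarticLift ℂ, quarticLift_injective ℂ, range_quarticLift ℂ, quarticLift_mk_X ℂ⟩
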